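/- arXiv:2305.07964 — 2 statements merged into one kernel-verified Lean document; each statement's English description precedes it below -/
import Mathlib

section
/- Let $\alpha\ge 2$ be a real number and let $u\colon\mathbb{R}^3\to\mathbb{R}^3$ be a $C^\infty$ compactly supported vector field. Then $-\int_{\mathbb{R}^3}|u(x)|^{\alpha-1}\,u(x)\cdot\Delta u(x)\,dx \;=\; \int_{\mathbb{R}^3}|u(x)|^{\alpha-1}\,|\nabla u(x)|^2\,dx \;+\; \frac{4(\alpha-1)}{(\alpha+1)^2}\int_{\mathbb{R}^3}\big|\nabla\big(|u(x)|^{\frac{\alpha+1}{2}}\big)\big|^2\,dx$. -/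
open MeasureTheory Set RealInnerProductSpace

noncomputable section

/-- Euclidean 3-space. -/
abbrev E3 : Type := EuclideanSpace ℝ (Fin 3)

/-- Partial derivative `∂_{x_j} f` at `x`. -/
def pd {F : Type*} [NormedAddCommGroup F] [NormedSpace ℝ F]
    (f : E3 → F) (j : Fin 3) (x : E3) : F :=
  fderiv ℝ f x (EuclideanSpace.single j 1)

/-- (Componentwise) Laplacian `Δ f` at `x`. -/
def lap {F : Type*} [NormedAddCommGroup F] [NormedSpace ℝ F]
    (f : E3 → F) (x : E3) : F :=
  ∑ j, pd (pd f j) j x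

/-- Divergence `div v` at `x`. -/
def div3 (v : E3 → E3) (x : E3) : ℝ := ∑ j, pd v j x j

/-- Advection term `(u·∇)w` at `x`. -/
def adv {F : Type*} [NormedAddCommGroup F] [NormedSpace ℝ F]
    (u : E3 → E3) (w : E3 → F) (x : E3) : F :=
  ∑ j, u x j • pd w j x

/-- Gradient `∇f` of a scalar function at `x`. -/
def grad (f : E3 → ℝ) (x : E3) : E3 :=
  ∑ j, pd f j x • EuclideanSpace.single j 1

/-- `div (v ⊗ v)` at `x`, whose `k`-th component is `∑_j ∂_{x_j} (v_j v_k)`. -/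
def divT (v : E3 → E3) (x : E3) : E3 :=
  ∑ j, pd (fun y => v y j • v y) j x

/-- Pointwise squared norm of the full gradient, `|∇f|² = ∑_{j,k} (∂_{x_j} f_k)²`. -/
def gradSq {F : Type*} [NormedAddCommGroup F] [NormedSpace ℝ F]
    (f : E3 → F) (x : E3) : ℝ :=
  ∑ j, ‖pd f j x‖ ^ 2

/-!
Integrating by parts in the direction `e_j`,
`-∫ |u|^{α-1} u·∂_j²u = ∫ ∂_j(|u|^{α-1} u)·∂_j u`, and the chain rule gives
`∂_j(|u|^{α-1} u)·∂_j u = |u|^{α-1} |∂_j u|² + (α-1) |u|^{α-3} (u·∂_j u)²`, whose last term is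
`4(α-1)/(α+1)² |∂_j |u|^{(α+1)/2}|²`. Integration by parts only needs `w ↦ |w|^{α-1} w` to be
differentiable, which holds at `w = 0` as well (with derivative `0`) because `α > 1`.
-/

theorem HasCompactSupport.integrable_norm_rpow_mul {X E : Type*} [TopologicalSpace X]
    [MeasurableSpace X] [OpensMeasurableSpace X] {μ : Measure X} [IsFiniteMeasureOnCompacts μ]
    [NormedAddCommGroup E] {u : X → E} (hsupp : HasCompactSupport u) (hu : Continuous u)
    {c : ℝ} (hc : 0 < c) {g : X → ℝ} (hg : Continuous g) :
    Integrable (fun x => ‖u x‖ ^ c * g x) μ :=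
  ((hu.norm.rpow_const fun _ => Or.inr hc.le).mul hg).integrable_of_hasCompactSupport
    (hsupp.comp_left (g := fun w : E => ‖w‖ ^ c) (by simp [hc.ne'])).mul_right

section

variable {E : Type*} [NormedAddCommGroup E] [InnerProductSpace ℝ E]

theorem hasFDerivAt_norm_rpow_smul_self (v : E) {c : ℝ} (hc : 0 < c) :
    HasFDerivAt (fun w : E => ‖w‖ ^ c • w)
      (‖v‖ ^ c • ContinuousLinearMap.id ℝ E
        + (c * ‖v‖ ^ (c - 2)) • (innerSL ℝ v).smulRight v) v := by
  rcases eq_or_ne v 0 with rfl | hv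
  · -- `‖w‖ ^ c • w` has norm `‖w‖ ^ (c + 1)`, which is `o(‖w‖)` since `c + 1 > 1`
    have hsmall := (hasFDerivAt_norm_rpow (0 : E) (by linarith : 1 < c + 1)).isLittleO
    simp only [norm_zero, Real.zero_rpow hc.ne', map_zero, smul_zero, sub_zero, zero_smul,
      ContinuousLinearMap.smulRight_zero, add_zero, Real.zero_rpow (by linarith : c + 1 ≠ 0),
      Real.rpow_add_one' (norm_nonneg _) (by linarith : c + 1 ≠ 0)] at hsmall ⊢
    refine .of_isLittleO (Asymptotics.IsLittleO.of_norm_left ?_)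
    simpa [norm_smul, abs_of_nonneg (Real.rpow_nonneg (norm_nonneg _) c)] using hsmall
  · have hnorm : HasFDerivAt (fun w : E => ‖w‖ ^ c) ((c * ‖v‖ ^ (c - 2)) • innerSL ℝ v) v := by
      convert ((hasStrictFDerivAt_norm_sq v).hasFDerivAt).rpow_const (p := c / 2)
        (Or.inl (by positivity)) using 1
      · ext w
        rw [← Real.rpow_natCast_mul (norm_nonneg _)]
        ring_nf
      · ext w
        rw [← Real.rpow_natCast_mul (norm_nonneg _)]
        simp only [smul_apply, smul_eq_mul, nsmul_eq_mul]
        ring_nf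
    convert hnorm.smul (hasFDerivAt_id v) using 1
    · rfl
    · ext w
      simp [smul_smul]

variable {F : Type*} [NormedAddCommGroup F] [NormedSpace ℝ F] {u : F → E}

theorem inner_fderiv_norm_rpow_smul_self_apply {x : F} (hu : DifferentiableAt ℝ u x) {c : ℝ}
    (hc : 0 < c) (v : F) :
    ⟪fderiv ℝ (fun y => ‖u y‖ ^ c • u y) x v, fderiv ℝ u x v⟫
      = ‖u x‖ ^ c * ‖fderiv ℝ u x v‖ ^ 2 + c * ‖u x‖ ^ (c - 2) * ⟪u x, fderiv ℝ u x v⟫ ^ 2 := by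
  have hG : HasFDerivAt (fun y => ‖u y‖ ^ c • u y) ((‖u x‖ ^ c • ContinuousLinearMap.id ℝ E
      + (c * ‖u x‖ ^ (c - 2)) • (innerSL ℝ (u x)).smulRight (u x)).comp (fderiv ℝ u x)) x :=
    (hasFDerivAt_norm_rpow_smul_self (u x) hc).comp x hu.hasFDerivAt
  rw [hG.fderiv]
  simp only [ContinuousLinearMap.comp_apply, add_apply, smul_apply,
    ContinuousLinearMap.id_apply, ContinuousLinearMap.smulRight_apply, innerSL_apply_apply,
    inner_add_left, real_inner_smul_left, real_inner_self_eq_norm_sq]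
  ring

theorem norm_fderiv_norm_rpow_sq (hu : Differentiable ℝ u) {p : ℝ} (hp : 1 < p) (x v : F) :
    ‖fderiv ℝ (fun y => ‖u y‖ ^ p) x v‖ ^ 2
      = p ^ 2 * ‖u x‖ ^ (2 * (p - 2)) * ⟪u x, fderiv ℝ u x v⟫ ^ 2 := by
  rw [hu.fderiv_norm_rpow hp, mul_comm 2, Real.rpow_mul (norm_nonneg _), Real.rpow_two]
  simp only [smul_apply, ContinuousLinearMap.comp_apply, innerSL_apply_apply, smul_eq_mul,
    Real.norm_eq_abs, sq_abs]
  ring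

theorem inner_fderiv_norm_rpow_smul_self_eq (hu : Differentiable ℝ u) {α : ℝ} (hα : 1 < α)
    (x v : F) :
    ⟪fderiv ℝ (fun y => ‖u y‖ ^ (α - 1) • u y) x v, fderiv ℝ u x v⟫
      = ‖u x‖ ^ (α - 1) * ‖fderiv ℝ u x v‖ ^ 2
        + 4 * (α - 1) / (α + 1) ^ 2 * ‖fderiv ℝ (fun y => ‖u y‖ ^ ((α + 1) / 2)) x v‖ ^ 2 := by
  rw [inner_fderiv_norm_rpow_smul_self_apply (hu x) (by linarith),
    norm_fderiv_norm_rpow_sq hu (by linarith)]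
  have hα' : α + 1 ≠ 0 := (by linarith : 0 < α + 1).ne'
  field_simp
  ring_nf

theorem integrable_norm_fderiv_norm_rpow_sq [MeasurableSpace F] [OpensMeasurableSpace F]
    {μ : Measure F} [IsFiniteMeasureOnCompacts μ] (hu : ContDiff ℝ 1 u)
    (hsupp : HasCompactSupport u) {p : ℝ} (hp : 1 < p) (v : F) :
    Integrable (fun x => ‖fderiv ℝ (fun y => ‖u y‖ ^ p) x v‖ ^ 2) μ := by
  have hcont : Continuous (fun x => fderiv ℝ (fun y => ‖u y‖ ^ p) x v) :=
    ((hu.norm_rpow hp).continuous_fderiv one_ne_zero).clm_apply continuous_const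
  have hNsupp : HasCompactSupport (fun y => ‖u y‖ ^ p) :=
    hsupp.comp_left (g := fun w : E => ‖w‖ ^ p) (by simp [(zero_lt_one.trans hp).ne'])
  have hcs : HasCompactSupport (fun x => ‖fderiv ℝ (fun y => ‖u y‖ ^ p) x v‖ ^ 2) :=
    (hNsupp.fderiv_apply ℝ v).comp_left (g := fun r : ℝ => ‖r‖ ^ 2) (by simp)
  exact (hcont.norm.pow 2).integrable_of_hasCompactSupport hcs

variable [FiniteDimensional ℝ F] [MeasurableSpace F] [BorelSpace F] {μ : Measure F}
  [μ.IsAddHaarMeasure]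

theorem neg_integral_norm_rpow_mul_inner_fderiv_fderiv (hu : ContDiff ℝ 2 u)
    (hsupp : HasCompactSupport u) {α : ℝ} (hα : 1 < α) (v : F) :
    -∫ x, ‖u x‖ ^ (α - 1) * ⟪u x, fderiv ℝ (fun y => fderiv ℝ u y v) x v⟫ ∂μ
      = ∫ x, ‖u x‖ ^ (α - 1) * ‖fderiv ℝ u x v‖ ^ 2 ∂μ
        + 4 * (α - 1) / (α + 1) ^ 2 *
            ∫ x, ‖fderiv ℝ (fun y => ‖u y‖ ^ ((α + 1) / 2)) x v‖ ^ 2 ∂μ := by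
  have hc : 0 < α - 1 := by linarith
  have hud : Differentiable ℝ u := hu.differentiable two_ne_zero
  have hdu : ContDiff ℝ 1 (fun y => fderiv ℝ u y v) :=
    (hu.fderiv_right (m := 1) (by norm_num)).clm_apply contDiff_const
  have hddu : Continuous (fun x => fderiv ℝ (fun y => fderiv ℝ u y v) x v) :=
    (hdu.continuous_fderiv one_ne_zero).clm_apply continuous_const
  have hpoint := inner_fderiv_norm_rpow_smul_self_eq hud hα (v := v)
  have hb := hsupp.integrable_norm_rpow_mul (μ := μ) hu.continuous hc
    (g := fun x => ‖fderiv ℝ u x v‖ ^ 2) (hdu.continuous.norm.pow 2)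
  have hd := (integrable_norm_fderiv_norm_rpow_sq (μ := μ) (hu.of_le one_le_two) hsupp
    (p := (α + 1) / 2) (by linarith) v).const_mul (4 * (α - 1) / (α + 1) ^ 2)
  have hf'g : Integrable
      (fun x => ⟪fderiv ℝ (fun y => ‖u y‖ ^ (α - 1) • u y) x v, fderiv ℝ u x v⟫) μ := by
    simp only [hpoint]
    exact hb.add hd
  have hfg' : Integrable
      (fun x => ⟪‖u x‖ ^ (α - 1) • u x, fderiv ℝ (fun y => fderiv ℝ u y v) x v⟫) μ := by
    simpa only [real_inner_smul_left]
      using hsupp.integrable_norm_rpow_mul hu.continuous hc (hu.continuous.inner hddu)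
  have hfg : Integrable (fun x => ⟪‖u x‖ ^ (α - 1) • u x, fderiv ℝ u x v⟫) μ := by
    simpa only [real_inner_smul_left]
      using hsupp.integrable_norm_rpow_mul hu.continuous hc (hu.continuous.inner hdu.continuous)
  have hibp : ∫ x, ⟪‖u x‖ ^ (α - 1) • u x, fderiv ℝ (fun y => fderiv ℝ u y v) x v⟫ ∂μ
      = -∫ x, ⟪fderiv ℝ (fun y => ‖u y‖ ^ (α - 1) • u y) x v, fderiv ℝ u x v⟫ ∂μ :=
    integral_bilinear_fderiv_right_eq_neg_left_of_integrable (B := innerSL ℝ) hf'g hfg' hfg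
      (fun x _ => ((hasFDerivAt_norm_rpow_smul_self (u x) hc).comp x
        (hud x).hasFDerivAt).differentiableAt)
      (fun x _ => hdu.differentiable one_ne_zero x)
  simp only [real_inner_smul_left, hpoint] at hibp
  rw [hibp, neg_neg, integral_add hb hd, integral_const_mul]

theorem neg_integral_norm_rpow_mul_inner_sum_fderiv_fderiv (hu : ContDiff ℝ 2 u)
    (hsupp : HasCompactSupport u) {α : ℝ} (hα : 1 < α) {ι : Type*} [Fintype ι] (v : ι → F) :
    -∫ x, ‖u x‖ ^ (α - 1) * ⟪u x, ∑ i, fderiv ℝ (fun y => fderiv ℝ u y (v i)) x (v i)⟫ ∂μ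
      = ∫ x, ‖u x‖ ^ (α - 1) * ∑ i, ‖fderiv ℝ u x (v i)‖ ^ 2 ∂μ
        + 4 * (α - 1) / (α + 1) ^ 2 *
            ∫ x, ∑ i, ‖fderiv ℝ (fun y => ‖u y‖ ^ ((α + 1) / 2)) x (v i)‖ ^ 2 ∂μ := by
  have hc : 0 < α - 1 := by linarith
  have hdu : ∀ i, ContDiff ℝ 1 (fun y => fderiv ℝ u y (v i)) := fun i =>
    (hu.fderiv_right (m := 1) (by norm_num)).clm_apply contDiff_const
  simp only [inner_sum, Finset.mul_sum]
  rw [integral_finsetSum _ fun i _ => hsupp.integrable_norm_rpow_mul hu.continuous hc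
      (hu.continuous.inner (((hdu i).continuous_fderiv one_ne_zero).clm_apply continuous_const)),
    integral_finsetSum _ fun i _ => hsupp.integrable_norm_rpow_mul hu.continuous hc
      (g := fun x => ‖fderiv ℝ u x (v i)‖ ^ 2) ((hdu i).continuous.norm.pow 2),
    integral_finsetSum _ fun i _ =>
      integrable_norm_fderiv_norm_rpow_sq (hu.of_le one_le_two) hsupp (by linarith) (v i),
    Finset.mul_sum, ← Finset.sum_neg_distrib, ← Finset.sum_add_distrib]
  exact Finset.sum_congr rfl fun i _ =>
    neg_integral_norm_rpow_mul_inner_fderiv_fderiv hu hsupp hα (v i)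

end

/-- For `α ≥ 2` and a smooth compactly supported vector field `u` on `ℝ³`,
the damping term tested against `-Δu` splits into two nonnegative quantities:
`-∫ |u|^{α-1} u·Δu = ∫ |u|^{α-1}|∇u|² + (4(α-1)/(α+1)²) ∫ |∇(|u|^{(α+1)/2})|²`. -/
theorem damping_term_identity (α : ℝ) (hα : 2 ≤ α) (u : E3 → E3)
    (hu : ContDiff ℝ (⊤ : ℕ∞) u) (hsupp : HasCompactSupport u) :
    -(∫ x : E3, ‖u x‖ ^ (α - 1) * ⟪u x, lap u x⟫)
      = (∫ x : E3, ‖u x‖ ^ (α - 1) * gradSq u x)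
        + (4 * (α - 1) / (α + 1) ^ 2) *
            ∫ x : E3, gradSq (fun y => ‖u y‖ ^ ((α + 1) / 2)) x :=
  neg_integral_norm_rpow_mul_inner_sum_fderiv_fderiv (hu.of_le (WithTop.coe_le_coe.2 le_top))
    hsupp (by linarith) fun j => EuclideanSpace.single j 1
end
end

section
/- Let $T^*\in(0,\infty]$, let $f,g\colon[0,T^*)\to\mathbb{R}$ be differentiable, and let $h\colon[0,T^*)\to\mathbb{R}$ be continuous with $h(t)\ge 0$ for all $t$. Suppose there are constants $c_1,c_2\in\mathbb{R}$ with $f(0)<c_1$ and $g(0)<c_2$ such that for every $t\in[0,T^*)$: if $f(t)<c_1$ and $g(t)<c_2$, then $f'(t)+h(t)\le 0$ and $g'(t)\le 0$. Then for every $T\in[0,T^*)$ one has $g(T)\le g(0)$ and $f(T)+\int_0^T h(t)\,dt\le f(0)$; in particular $\int_0^T h(t)\,dt\le f(0)-f(T)$. -/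
/-!
As long as `f < c₁` and `g < c₂` on `[0, t)`, both derivatives are nonpositive there (`h ≥ 0`), so
`f t ≤ f 0 < c₁` and `g t ≤ g 0 < c₂`. Hence there is no first time at which a barrier is reached,
and the hypotheses hold on all of `[0, T]`. Then `g` is nonincreasing, and the
inequality `-f' ≥ h` integrates to `∫₀ᵀ h ≤ f 0 - f T`.
-/

open Set

theorem forall_mem_Icc_of_forall_Ico_imp {α : Type*} [ConditionallyCompleteLinearOrder α]
    [TopologicalSpace α] [OrderTopology α] {p : α → Prop} {a b : α}
    (hclosed : IsClosed {t ∈ Icc a b | ¬ p t})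
    (hstep : ∀ t ∈ Icc a b, (∀ s ∈ Ico a t, p s) → p t) :
    ∀ t ∈ Icc a b, p t := by
  by_contra! ⟨t, ht, hpt⟩
  have hbdd : BddBelow {t ∈ Icc a b | ¬ p t} := ⟨a, fun s hs => hs.1.1⟩
  obtain ⟨hmem, hnp⟩ := hclosed.csInf_mem ⟨t, ht, hpt⟩ hbdd
  refine hnp (hstep _ hmem fun s hs => ?_)
  by_contra hps
  exact (csInf_le hbdd ⟨⟨hs.1, hs.2.le.trans hmem.2⟩, hps⟩).not_gt hs.2

theorem hasDerivAt_derivWithin_of_Icc_subset {f : ℝ → ℝ} {s : Set ℝ} {a b t : ℝ}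
    (hs : Icc a b ⊆ s) (hf : DifferentiableOn ℝ f s) (ht : t ∈ Ioo a b) :
    HasDerivAt f (derivWithin f s t) t := by
  have hs_nhds : s ∈ nhds t := Filter.mem_of_superset (Icc_mem_nhds ht.1 ht.2) hs
  rw [derivWithin_of_mem_nhds hs_nhds]
  exact (hf.differentiableAt hs_nhds).hasDerivAt

theorem antitoneOn_Icc_of_derivWithin_nonpos {f : ℝ → ℝ} {s : Set ℝ} {a b : ℝ}
    (hs : Icc a b ⊆ s) (hf : DifferentiableOn ℝ f s)
    (hf' : ∀ t ∈ Ioo a b, derivWithin f s t ≤ 0) : AntitoneOn f (Icc a b) := by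
  refine antitoneOn_of_deriv_nonpos (convex_Icc a b) (hf.continuousOn.mono hs) ?_ ?_ <;>
    rw [interior_Icc]
  · exact fun t ht => (hasDerivAt_derivWithin_of_Icc_subset hs hf ht).differentiableAt
      |>.differentiableWithinAt
  · exact fun t ht => (hasDerivAt_derivWithin_of_Icc_subset hs hf ht).deriv ▸ hf' t ht

theorem integral_le_sub_of_derivWithin_add_le {f h : ℝ → ℝ} {s : Set ℝ} {a b : ℝ}
    (hab : a ≤ b) (hs : Icc a b ⊆ s) (hf : DifferentiableOn ℝ f s)
    (hh : ContinuousOn h (Icc a b)) (hfh : ∀ t ∈ Ioo a b, derivWithin f s t + h t ≤ 0) :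
    ∫ t in a..b, h t ≤ f a - f b := by
  have := intervalIntegral.integral_le_sub_of_hasDeriv_right_of_le hab
    (hf.continuousOn.mono hs).neg
    (fun t ht => (hasDerivAt_derivWithin_of_Icc_subset hs hf ht).neg.hasDerivWithinAt)
    (hh.integrableOn_compact isCompact_Icc) (fun t ht => by linarith [hfh t ht])
  simp only [Pi.neg_apply] at this
  linarith

theorem forall_lt_of_derivWithin_nonpos_of_lt {f g : ℝ → ℝ} {s : Set ℝ} {a b c₁ c₂ : ℝ}
    (hs : Icc a b ⊆ s) (hf : DifferentiableOn ℝ f s) (hg : DifferentiableOn ℝ g s)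
    (hfa : f a < c₁) (hga : g a < c₂)
    (hstep : ∀ t ∈ Ioo a b, f t < c₁ → g t < c₂ →
      derivWithin f s t ≤ 0 ∧ derivWithin g s t ≤ 0) :
    ∀ t ∈ Icc a b, f t < c₁ ∧ g t < c₂ := by
  refine forall_mem_Icc_of_forall_Ico_imp ?_ fun t ht hbelow => ?_
  · have hclosed : IsClosed (Icc a b ∩ (f ⁻¹' Ici c₁ ∪ g ⁻¹' Ici c₂)) :=
      (((hf.continuousOn.mono hs).prodMk (hg.continuousOn.mono hs)).preimage_isClosed_of_isClosed
        isClosed_Icc ((isClosed_Ici.preimage continuous_fst).union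
          (isClosed_Ici.preimage continuous_snd)))
    convert hclosed using 1
    ext u
    simp only [mem_ofPred_eq, not_and_or, not_lt, mem_inter_iff, mem_union, mem_preimage, mem_Ici]
  · have hsub : Icc a t ⊆ s := (Icc_subset_Icc_right ht.2).trans hs
    have hderiv (u : ℝ) (hu : u ∈ Ioo a t) := hstep u ⟨hu.1, hu.2.trans_le ht.2⟩
      (hbelow u (Ioo_subset_Ico_self hu)).1 (hbelow u (Ioo_subset_Ico_self hu)).2
    have hat : a ∈ Icc a t := left_mem_Icc.mpr ht.1
    have htt : t ∈ Icc a t := right_mem_Icc.mpr ht.1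
    exact ⟨(antitoneOn_Icc_of_derivWithin_nonpos hsub hf (fun u hu => (hderiv u hu).1)
        hat htt ht.1).trans_lt hfa,
      (antitoneOn_Icc_of_derivWithin_nonpos hsub hg (fun u hu => (hderiv u hu).2)
        hat htt ht.1).trans_lt hga⟩

theorem barrier_lemma_with_dissipation_general (Tstar : EReal)
    (f g h : ℝ → ℝ) (c₁ c₂ : ℝ)
    (hf : DifferentiableOn ℝ f {t : ℝ | 0 ≤ t ∧ (t : EReal) < Tstar})
    (hg : DifferentiableOn ℝ g {t : ℝ | 0 ≤ t ∧ (t : EReal) < Tstar})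
    (hh : ContinuousOn h {t : ℝ | 0 ≤ t ∧ (t : EReal) < Tstar})
    (hhpos : ∀ t : ℝ, 0 ≤ t → (t : EReal) < Tstar → 0 ≤ h t)
    (hf0 : f 0 < c₁) (hg0 : g 0 < c₂)
    (hstep : ∀ t : ℝ, 0 ≤ t → (t : EReal) < Tstar → f t < c₁ → g t < c₂ →
      derivWithin f {s : ℝ | 0 ≤ s ∧ (s : EReal) < Tstar} t + h t ≤ 0 ∧
      derivWithin g {s : ℝ | 0 ≤ s ∧ (s : EReal) < Tstar} t ≤ 0) :
    ∀ T : ℝ, 0 ≤ T → (T : EReal) < Tstar →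
      g T ≤ g 0 ∧ f T + (∫ t in (0:ℝ)..T, h t) ≤ f 0 ∧
        (∫ t in (0:ℝ)..T, h t) ≤ f 0 - f T := by
  intro T hT0 hTlt
  set S : Set ℝ := {t : ℝ | 0 ≤ t ∧ (t : EReal) < Tstar}
  have hIcc : Icc 0 T ⊆ S := fun t ht =>
    ⟨ht.1, lt_of_le_of_lt (EReal.coe_le_coe_iff.mpr ht.2) hTlt⟩
  have hbelow : ∀ t ∈ Icc 0 T, f t < c₁ ∧ g t < c₂ :=
    forall_lt_of_derivWithin_nonpos_of_lt hIcc hf hg hf0 hg0 fun t ht hft hgt => by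
      obtain ⟨ht0, htT⟩ := hIcc (Ioo_subset_Icc_self ht)
      obtain ⟨hdf, hdg⟩ := hstep t ht0 htT hft hgt
      exact ⟨by linarith [hhpos t ht0 htT], hdg⟩
  have hdiss (t : ℝ) (ht : t ∈ Ioo 0 T) :
      derivWithin f S t + h t ≤ 0 ∧ derivWithin g S t ≤ 0 := by
    obtain ⟨ht0, htT⟩ := hIcc (Ioo_subset_Icc_self ht)
    obtain ⟨hft, hgt⟩ := hbelow t (Ioo_subset_Icc_self ht)
    exact hstep t ht0 htT hft hgt
  have hgT : g T ≤ g 0 :=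
    antitoneOn_Icc_of_derivWithin_nonpos hIcc hg (fun t ht => (hdiss t ht).2)
      (left_mem_Icc.mpr hT0) (right_mem_Icc.mpr hT0) hT0
  have hint : ∫ t in (0:ℝ)..T, h t ≤ f 0 - f T :=
    integral_le_sub_of_derivWithin_add_le hT0 hIcc hf (hh.mono hIcc) fun t ht => (hdiss t ht).1
  exact ⟨hgT, by linarith, hint⟩

/-- Barrier lemma with dissipation on `[0, T*)`, `T* ∈ (0, ∞]`: if
`f(0) < c₁`, `g(0) < c₂`, `h ≥ 0` is continuous, and at every time where `f < c₁` and
`g < c₂` one has `f' + h ≤ 0` and `g' ≤ 0`, then for every `T ∈ [0, T*)`: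
`g(T) ≤ g(0)` and `f(T) + ∫₀ᵀ h ≤ f(0)`, in particular `∫₀ᵀ h ≤ f(0) - f(T)`. -/
theorem barrier_lemma_with_dissipation (Tstar : EReal) (hTstar : 0 < Tstar)
    (f g h : ℝ → ℝ) (c₁ c₂ : ℝ)
    (hf : DifferentiableOn ℝ f {t : ℝ | 0 ≤ t ∧ (t : EReal) < Tstar})
    (hg : DifferentiableOn ℝ g {t : ℝ | 0 ≤ t ∧ (t : EReal) < Tstar})
    (hh : ContinuousOn h {t : ℝ | 0 ≤ t ∧ (t : EReal) < Tstar})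
    (hhpos : ∀ t : ℝ, 0 ≤ t → (t : EReal) < Tstar → 0 ≤ h t)
    (hf0 : f 0 < c₁) (hg0 : g 0 < c₂)
    (hstep : ∀ t : ℝ, 0 ≤ t → (t : EReal) < Tstar → f t < c₁ → g t < c₂ →
      derivWithin f {s : ℝ | 0 ≤ s ∧ (s : EReal) < Tstar} t + h t ≤ 0 ∧
      derivWithin g {s : ℝ | 0 ≤ s ∧ (s : EReal) < Tstar} t ≤ 0) :
    ∀ T : ℝ, 0 ≤ T → (T : EReal) < Tstar →
      g T ≤ g 0 ∧ f T + (∫ t in (0:ℝ)..T, h t) ≤ f 0 ∧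
        (∫ t in (0:ℝ)..T, h t) ≤ f 0 - f T :=
  barrier_lemma_with_dissipation_general Tstar f g h c₁ c₂ hf hg hh hhpos hf0 hg0 hstep
end
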